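/- For every t > 0 and every n ≥ 1, the moment generating function of H_n satisfies (1 + (e^t − 1) a_0)^n ≤ 𝔼(e^{t H_n}) < (1 + (e^t − 1) Σ_{i=0}^∞ a_i)^n. -/

import Mathlib

/-!
Put `F n = exp (t H_n)`. Since `ξ_{n+1} ∈ {0, 1}`, `F (n+1) = F n (1 + (eᵗ - 1) ξ_{n+1})`, and
conditioning on `ξ_1, …, ξ_n` replaces `ξ_{n+1}` by the intensity
`λ_{n+1} = a_0 + ∑_{1 ≤ i ≤ n} a_{n+1-i} ξ_i ∈ [a_0, ∑_{i ≤ n} a_i]`. Hence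
`(1 + (eᵗ - 1) a_0) 𝔼 F n ≤ 𝔼 F (n+1) ≤ (1 + (eᵗ - 1) ∑_{i ≤ n} a_i) 𝔼 F n`, and induction on `n`
gives both bounds; the upper one is strict because `∑_{i ≤ n} a_i < ∑ a_i`.
-/

open MeasureTheory Filter Topology Set

lemma Real.exp_mul_eq_one_add_of_eq_zero_or_eq_one (t : ℝ) {x : ℝ} (hx : x = 0 ∨ x = 1) :
    Real.exp (t * x) = 1 + (Real.exp t - 1) * x := by
  rcases hx with rfl | rfl <;> simp

lemma Real.one_add_exp_sub_one_mul_nonneg {t c : ℝ} (ht : 0 ≤ t) (hc : 0 ≤ c) :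
    0 ≤ 1 + (Real.exp t - 1) * c :=
  add_nonneg zero_le_one (mul_nonneg (sub_nonneg.2 (Real.one_le_exp ht)) hc)

lemma Finset.add_sum_Icc_reflect {M : Type*} [AddCommMonoid M] (a : ℕ → M) (n : ℕ) :
    a 0 + ∑ i ∈ Finset.Icc 1 n, a (n + 1 - i) = ∑ i ∈ Finset.range (n + 1), a i := by
  rw [← Finset.Ico_add_one_right_eq_Icc, Finset.sum_Ico_reflect a 1 (Nat.le_succ (n + 1)),
    Finset.range_eq_Ico, Finset.sum_eq_sum_Ico_succ_bot n.succ_pos]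
  simp

lemma Finset.sum_range_lt_tsum_of_pos {a : ℕ → ℝ} (ha : ∀ i, 0 < a i) (hs : Summable a) (n : ℕ) :
    ∑ i ∈ Finset.range n, a i < ∑' i, a i :=
  calc ∑ i ∈ Finset.range n, a i < ∑ i ∈ Finset.range (n + 1), a i := by
        rw [Finset.sum_range_succ]; linarith [ha n]
    _ ≤ ∑' i, a i := hs.sum_le_tsum _ fun i _ => (ha i).le

namespace MeasureTheory

variable {Ω : Type*}

lemma integral_mul_eq_integral_mul_of_condExp_ae_eq {m m₀ : MeasurableSpace Ω} {μ : Measure Ω}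
    (hm : m ≤ m₀) [SigmaFinite (μ.trim hm)] {f g h : Ω → ℝ} (hf : StronglyMeasurable[m] f)
    (hfg : Integrable (f * g) μ) (hg : Integrable g μ) (hgh : μ[g | m] =ᵐ[μ] h) :
    ∫ ω, f ω * g ω ∂μ = ∫ ω, f ω * h ω ∂μ :=
  calc ∫ ω, f ω * g ω ∂μ = ∫ ω, (μ[f * g | m]) ω ∂μ := (integral_condExp hm).symm
    _ = ∫ ω, f ω * h ω ∂μ := integral_congr_ae <|
        (condExp_mul_of_stronglyMeasurable_left hf hfg hg).trans <| by
          filter_upwards [hgh] with ω hω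
          simp [hω]

variable [MeasurableSpace Ω] {μ : Measure Ω}

lemma integral_eq_measureReal_of_eq_zero_or_eq_one {f : Ω → ℝ} (hf : Measurable f)
    (h01 : ∀ ω, f ω = 0 ∨ f ω = 1) : ∫ ω, f ω ∂μ = μ.real {ω | f ω = 1} := by
  have hf_eq : f = {ω | f ω = 1}.indicator 1 := by
    ext ω
    rcases h01 ω with h | h <;> simp [Set.indicator, h]
  conv_lhs => rw [hf_eq]
  exact integral_indicator_one (hf (measurableSet_singleton 1))

variable {f g : Ω → ℝ} {c : ℝ}

lemma mul_integral_le_integral_mul (hf : Integrable f μ) (hfg : Integrable (fun ω => f ω * g ω) μ)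
    (hf₀ : ∀ ω, 0 ≤ f ω) (hc : ∀ ω, c ≤ g ω) : c * ∫ ω, f ω ∂μ ≤ ∫ ω, f ω * g ω ∂μ := by
  rw [← integral_const_mul]
  exact integral_mono (hf.const_mul c) hfg fun ω => by
    simpa [mul_comm] using mul_le_mul_of_nonneg_left (hc ω) (hf₀ ω)

lemma integral_mul_le_mul_integral (hf : Integrable f μ) (hfg : Integrable (fun ω => f ω * g ω) μ)
    (hf₀ : ∀ ω, 0 ≤ f ω) (hc : ∀ ω, g ω ≤ c) : ∫ ω, f ω * g ω ∂μ ≤ c * ∫ ω, f ω ∂μ := by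
  rw [← integral_const_mul]
  exact integral_mono hfg (hf.const_mul c) fun ω => by
    simpa [mul_comm] using mul_le_mul_of_nonneg_left (hc ω) (hf₀ ω)

end MeasureTheory

lemma Set.mem_Icc_zero_one_of_eq_zero_or_eq_one {x : ℝ} (hx : x = 0 ∨ x = 1) :
    x ∈ Icc (0 : ℝ) 1 := by
  rcases hx with rfl | rfl <;> simp

namespace DiscreteHawkes

open ProbabilityTheory

variable {Ω : Type*} {a : ℕ → ℝ} {ξ : ℕ → Ω → ℝ}

/-- `H_n`. -/
def count (ξ : ℕ → Ω → ℝ) (n : ℕ) (ω : Ω) : ℝ := ∑ i ∈ Finset.Icc 1 n, ξ i ω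

/-- `σ(ξ_1, …, ξ_n)`. -/
abbrev history (ξ : ℕ → Ω → ℝ) (n : ℕ) : MeasurableSpace Ω :=
  ⨆ i ∈ Finset.Icc 1 n, MeasurableSpace.comap (ξ i) Real.measurableSpace

/-- `ℙ(ξ_n = 1 | ξ_1, …, ξ_{n-1})`. -/
def intensity (a : ℕ → ℝ) (ξ : ℕ → Ω → ℝ) (n : ℕ) (ω : Ω) : ℝ :=
  a 0 + ∑ i ∈ Finset.Icc 1 (n - 1), a (n - i) * ξ i ω

lemma measurable_count_history (n : ℕ) : Measurable[history ξ n] (count ξ n) :=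
  Finset.measurable_sum _ fun i hi => Measurable.of_comap_le <|
    le_iSup₂ (f := fun i (_ : i ∈ Finset.Icc 1 n) => MeasurableSpace.comap (ξ i) _) i hi

lemma count_succ (n : ℕ) (ω : Ω) : count ξ (n + 1) ω = count ξ n ω + ξ (n + 1) ω :=
  Finset.sum_Icc_succ_top (Nat.le_add_left 1 n) _

lemma count_mem_Icc (hξ : ∀ i, 1 ≤ i → ∀ ω, ξ i ω ∈ Icc (0 : ℝ) 1) (n : ℕ) (ω : Ω) :
    count ξ n ω ∈ Icc (0 : ℝ) n := by
  induction n with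
  | zero => simp [count]
  | succ n ih =>
    have hξn := hξ (n + 1) n.succ_pos ω
    rw [count_succ]
    push_cast
    constructor <;> linarith [ih.1, ih.2, hξn.1, hξn.2]

lemma intensity_succ_mem_Icc (ha : ∀ i, 0 ≤ a i) (hξ : ∀ i, 1 ≤ i → ∀ ω, ξ i ω ∈ Icc (0 : ℝ) 1)
    (n : ℕ) (ω : Ω) :
    intensity a ξ (n + 1) ω ∈ Icc (a 0) (∑ i ∈ Finset.range (n + 1), a i) := by
  rw [intensity, Nat.add_sub_cancel, ← Finset.add_sum_Icc_reflect]
  constructor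
  · exact le_add_of_nonneg_right <| Finset.sum_nonneg fun i hi =>
      mul_nonneg (ha _) (hξ i (Finset.mem_Icc.1 hi).1 ω).1
  · exact add_le_add le_rfl <| Finset.sum_le_sum fun i hi =>
      mul_le_of_le_one_right (ha _) (hξ i (Finset.mem_Icc.1 hi).1 ω).2

variable [MeasurableSpace Ω] {μ : Measure Ω}

lemma history_le (hmeas : ∀ i, Measurable (ξ i)) (n : ℕ) : history ξ n ≤ ‹MeasurableSpace Ω› :=
  iSup₂_le fun i _ => (hmeas i).comap_le

lemma measurable_count (hmeas : ∀ i, Measurable (ξ i)) (n : ℕ) : Measurable (count ξ n) :=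
  (measurable_count_history n).mono (history_le hmeas n) le_rfl

lemma measurable_intensity (hmeas : ∀ i, Measurable (ξ i)) (n : ℕ) :
    Measurable (intensity a ξ n) :=
  measurable_const.add <| Finset.measurable_sum _ fun i _ => measurable_const.mul (hmeas i)

lemma integrable_exp_mul_count [IsFiniteMeasure μ] (hmeas : ∀ i, Measurable (ξ i))
    (hξ : ∀ i, 1 ≤ i → ∀ ω, ξ i ω ∈ Icc (0 : ℝ) 1) (t : ℝ) (n : ℕ) :
    Integrable (fun ω => Real.exp (t * count ξ n ω)) μ := by
  have hmeas_exp := Real.measurable_exp.comp ((measurable_count hmeas n).const_mul t)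
  refine .of_bound hmeas_exp.aestronglyMeasurable (Real.exp (|t| * n)) (ae_of_all _ fun ω => ?_)
  have hcount := count_mem_Icc hξ n ω
  rw [Real.norm_of_nonneg (Real.exp_pos _).le, Real.exp_le_exp]
  calc t * count ξ n ω ≤ |t| * count ξ n ω := mul_le_mul_of_nonneg_right (le_abs_self t) hcount.1
    _ ≤ |t| * n := mul_le_mul_of_nonneg_left hcount.2 (abs_nonneg t)

structure IsDTHP (μ : Measure Ω) (a : ℕ → ℝ) (ξ : ℕ → Ω → ℝ) : Prop where
  measurable : ∀ i, Measurable (ξ i)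
  eq_zero_or_eq_one : ∀ i, 1 ≤ i → ∀ ω, ξ i ω = 0 ∨ ξ i ω = 1
  measure_first_eq_one : μ {ω | ξ 1 ω = 1} = ENNReal.ofReal (a 0)
  condExp_eq_intensity : ∀ n, 2 ≤ n → μ[ξ n | history ξ (n - 1)] =ᵐ[μ] intensity a ξ n

namespace IsDTHP

lemma mem_Icc (hH : IsDTHP μ a ξ) : ∀ i, 1 ≤ i → ∀ ω, ξ i ω ∈ Icc (0 : ℝ) 1 := fun i hi ω =>
  mem_Icc_zero_one_of_eq_zero_or_eq_one (hH.eq_zero_or_eq_one i hi ω)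

lemma norm_le_one (hH : IsDTHP μ a ξ) {i : ℕ} (hi : 1 ≤ i) (ω : Ω) : ‖ξ i ω‖ ≤ 1 := by
  rw [Real.norm_of_nonneg (hH.mem_Icc i hi ω).1]
  exact (hH.mem_Icc i hi ω).2

lemma integrable (hH : IsDTHP μ a ξ) [IsFiniteMeasure μ] {i : ℕ} (hi : 1 ≤ i) :
    Integrable (ξ i) μ :=
  .of_bound (hH.measurable i).aestronglyMeasurable 1 (ae_of_all _ (hH.norm_le_one hi))

variable [IsProbabilityMeasure μ]

lemma integral_exp_mul_count_mul_succ (hH : IsDTHP μ a ξ) (ha₀ : 0 ≤ a 0) (t : ℝ) (n : ℕ) :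
    ∫ ω, Real.exp (t * count ξ n ω) * ξ (n + 1) ω ∂μ
      = ∫ ω, Real.exp (t * count ξ n ω) * intensity a ξ (n + 1) ω ∂μ := by
  rcases n with _ | n
  · simp [count, intensity, integral_eq_measureReal_of_eq_zero_or_eq_one (hH.measurable 1)
      (hH.eq_zero_or_eq_one 1 le_rfl), measureReal_def, hH.measure_first_eq_one, ha₀]
  · have hF := integrable_exp_mul_count (μ := μ) hH.measurable hH.mem_Icc t (n + 1)
    have hFξ : Integrable (fun ω => Real.exp (t * count ξ (n + 1) ω) * ξ (n + 2) ω) μ :=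
      hF.mul_bdd (hH.measurable _).aestronglyMeasurable (ae_of_all _ (hH.norm_le_one (by omega)))
    exact integral_mul_eq_integral_mul_of_condExp_ae_eq (history_le hH.measurable (n + 1))
      (f := fun ω => Real.exp (t * count ξ (n + 1) ω))
      (Real.measurable_exp.comp ((measurable_count_history (n + 1)).const_mul t)).stronglyMeasurable
      hFξ (hH.integrable (by omega)) (hH.condExp_eq_intensity (n + 2) (by omega))

lemma mgf_count_succ (hH : IsDTHP μ a ξ) (ha₀ : 0 ≤ a 0) (t : ℝ) (n : ℕ) :
    mgf (count ξ (n + 1)) μ t = mgf (count ξ n) μ t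
      + (Real.exp t - 1) * ∫ ω, Real.exp (t * count ξ n ω) * intensity a ξ (n + 1) ω ∂μ := by
  have hF := integrable_exp_mul_count (μ := μ) hH.measurable hH.mem_Icc t n
  have hFξ : Integrable (fun ω => Real.exp (t * count ξ n ω) * ξ (n + 1) ω) μ :=
    hF.mul_bdd (hH.measurable _).aestronglyMeasurable (ae_of_all _ (hH.norm_le_one (by omega)))
  rw [← hH.integral_exp_mul_count_mul_succ ha₀, ← integral_const_mul, mgf, mgf,
    ← integral_add hF (hFξ.const_mul _)]
  congr with ω
  dsimp only
  rw [count_succ, mul_add, Real.exp_add,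
    Real.exp_mul_eq_one_add_of_eq_zero_or_eq_one t (hH.eq_zero_or_eq_one _ (by omega) ω)]
  ring

lemma mgf_count_succ_mem_Icc (hH : IsDTHP μ a ξ) (ha : ∀ i, 0 ≤ a i) {t : ℝ} (ht : 0 ≤ t)
    (n : ℕ) :
    mgf (count ξ (n + 1)) μ t ∈ Icc ((1 + (Real.exp t - 1) * a 0) * mgf (count ξ n) μ t)
      ((1 + (Real.exp t - 1) * ∑ i ∈ Finset.range (n + 1), a i) * mgf (count ξ n) μ t) := by
  have hbd := intensity_succ_mem_Icc ha hH.mem_Icc n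
  have hF := integrable_exp_mul_count (μ := μ) hH.measurable hH.mem_Icc t n
  have hFI : Integrable (fun ω => Real.exp (t * count ξ n ω) * intensity a ξ (n + 1) ω) μ :=
    hF.mul_bdd (measurable_intensity hH.measurable _).aestronglyMeasurable <|
      ae_of_all _ fun ω => by
        rw [Real.norm_of_nonneg ((ha 0).trans (hbd ω).1)]
        exact (hbd ω).2
  have hF₀ : ∀ ω, 0 ≤ Real.exp (t * count ξ n ω) := fun ω => (Real.exp_pos _).le
  have hlo := mul_integral_le_integral_mul hF hFI hF₀ fun ω => (hbd ω).1
  have hhi := integral_mul_le_mul_integral hF hFI hF₀ fun ω => (hbd ω).2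
  have hE : 0 ≤ Real.exp t - 1 := sub_nonneg.2 (Real.one_le_exp ht)
  rw [hH.mgf_count_succ (ha 0), mgf]
  constructor
  · linear_combination mul_le_mul_of_nonneg_left hlo hE
  · linear_combination mul_le_mul_of_nonneg_left hhi hE

lemma mgf_count_mem_Icc (hH : IsDTHP μ a ξ) (ha : ∀ i, 0 ≤ a i) (hs : Summable a) {t : ℝ}
    (ht : 0 ≤ t) (n : ℕ) :
    mgf (count ξ n) μ t ∈
      Icc ((1 + (Real.exp t - 1) * a 0) ^ n) ((1 + (Real.exp t - 1) * ∑' i, a i) ^ n) := by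
  have hL := Real.one_add_exp_sub_one_mul_nonneg ht (ha 0)
  have hU : 0 ≤ 1 + (Real.exp t - 1) * ∑' i, a i :=
    Real.one_add_exp_sub_one_mul_nonneg ht (tsum_nonneg ha)
  have hE : 0 ≤ Real.exp t - 1 := sub_nonneg.2 (Real.one_le_exp ht)
  induction n with
  | zero => simp [mgf, count]
  | succ n ih =>
    have hstep := hH.mgf_count_succ_mem_Icc ha ht n
    have hM : 0 ≤ mgf (count ξ n) μ t := (pow_nonneg hL n).trans ih.1
    constructor
    · calc (1 + (Real.exp t - 1) * a 0) ^ (n + 1)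
          = (1 + (Real.exp t - 1) * a 0) * (1 + (Real.exp t - 1) * a 0) ^ n := pow_succ' _ _
        _ ≤ (1 + (Real.exp t - 1) * a 0) * mgf (count ξ n) μ t := by gcongr; exact ih.1
        _ ≤ mgf (count ξ (n + 1)) μ t := hstep.1
    · calc mgf (count ξ (n + 1)) μ t
          ≤ (1 + (Real.exp t - 1) * ∑ i ∈ Finset.range (n + 1), a i) * mgf (count ξ n) μ t :=
            hstep.2
        _ ≤ (1 + (Real.exp t - 1) * ∑' i, a i) * (1 + (Real.exp t - 1) * ∑' i, a i) ^ n := by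
          gcongr
          exacts [hs.sum_le_tsum _ fun i _ => ha i, ih.2]
        _ = (1 + (Real.exp t - 1) * ∑' i, a i) ^ (n + 1) := (pow_succ' _ _).symm

end IsDTHP

end DiscreteHawkes

open DiscreteHawkes ProbabilityTheory in
theorem dthp_mgf_positive_t_bounds_general
    {Ω : Type*} [MeasurableSpace Ω] (μ : Measure Ω) [IsProbabilityMeasure μ]
    (a : ℕ → ℝ) (ξ : ℕ → Ω → ℝ)
    (ha_pos : ∀ i, 0 < a i)
    (ha_sum : Summable a)
    (hmeas : ∀ n, Measurable (ξ n))
    (hval : ∀ n, 1 ≤ n → ∀ ω, ξ n ω = 0 ∨ ξ n ω = 1)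
    (hinit : μ {ω | ξ 1 ω = 1} = ENNReal.ofReal (a 0))
    (hcond : ∀ n, 2 ≤ n →
      μ[ξ n | ⨆ i ∈ Finset.Icc 1 (n - 1), MeasurableSpace.comap (ξ i) Real.measurableSpace]
        =ᵐ[μ] fun ω => a 0 + ∑ i ∈ Finset.Icc 1 (n - 1), a (n - i) * ξ i ω)
    :
    ∀ t : ℝ, 0 < t → ∀ n, 1 ≤ n →
      (1 + (Real.exp t - 1) * a 0) ^ n ≤
        (∫ ω, Real.exp (t * ∑ i ∈ Finset.Icc 1 n, ξ i ω) ∂μ) ∧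
      (∫ ω, Real.exp (t * ∑ i ∈ Finset.Icc 1 n, ξ i ω) ∂μ) <
        (1 + (Real.exp t - 1) * ∑' i, a i) ^ n := by
  intro t ht n hn
  obtain ⟨n, rfl⟩ := Nat.exists_eq_add_of_le' hn
  have hH : IsDTHP μ a ξ := ⟨hmeas, hval, hinit, hcond⟩
  have ha i : 0 ≤ a i := (ha_pos i).le
  have hE : 0 < Real.exp t - 1 := sub_pos.2 (Real.one_lt_exp_iff.2 ht)
  have hM := hH.mgf_count_mem_Icc ha ha_sum ht.le
  change _ ≤ mgf (count ξ (n + 1)) μ t ∧ mgf (count ξ (n + 1)) μ t < _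
  refine ⟨(hM (n + 1)).1, ?_⟩
  calc mgf (count ξ (n + 1)) μ t
      ≤ (1 + (Real.exp t - 1) * ∑ i ∈ Finset.range (n + 1), a i) * mgf (count ξ n) μ t :=
        (hH.mgf_count_succ_mem_Icc ha ht.le n).2
    _ < (1 + (Real.exp t - 1) * ∑' i, a i) * mgf (count ξ n) μ t := by
        gcongr
        · exact mgf_pos (integrable_exp_mul_count hmeas hH.mem_Icc t n)
        · exact Finset.sum_range_lt_tsum_of_pos ha_pos ha_sum _
    _ ≤ (1 + (Real.exp t - 1) * ∑' i, a i) * (1 + (Real.exp t - 1) * ∑' i, a i) ^ n := by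
        gcongr
        exacts [Real.one_add_exp_sub_one_mul_nonneg ht.le (tsum_nonneg ha), (hM n).2]
    _ = (1 + (Real.exp t - 1) * ∑' i, a i) ^ (n + 1) := (pow_succ' _ _).symm

theorem dthp_mgf_positive_t_bounds
    {Ω : Type*} [MeasurableSpace Ω] (μ : Measure Ω) [IsProbabilityMeasure μ]
    (a : ℕ → ℝ) (ξ : ℕ → Ω → ℝ)
    (ha_pos : ∀ i, 0 < a i)
    (ha_sum : Summable a)
    (ha_lt_one : ∑' i, a i < 1)
    (ha_moment : Summable (fun i : ℕ => (i : ℝ) * a i))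
    (hmeas : ∀ n, Measurable (ξ n))
    (hval : ∀ n, 1 ≤ n → ∀ ω, ξ n ω = 0 ∨ ξ n ω = 1)
    (hinit : μ {ω | ξ 1 ω = 1} = ENNReal.ofReal (a 0))
    (hcond : ∀ n, 2 ≤ n →
      μ[ξ n | ⨆ i ∈ Finset.Icc 1 (n - 1), MeasurableSpace.comap (ξ i) Real.measurableSpace]
        =ᵐ[μ] fun ω => a 0 + ∑ i ∈ Finset.Icc 1 (n - 1), a (n - i) * ξ i ω)
    :
    ∀ t : ℝ, 0 < t → ∀ n, 1 ≤ n →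
      (1 + (Real.exp t - 1) * a 0) ^ n ≤
        (∫ ω, Real.exp (t * ∑ i ∈ Finset.Icc 1 n, ξ i ω) ∂μ) ∧
      (∫ ω, Real.exp (t * ∑ i ∈ Finset.Icc 1 n, ξ i ω) ∂μ) <
        (1 + (Real.exp t - 1) * ∑' i, a i) ^ n :=
  dthp_mgf_positive_t_bounds_general μ a ξ ha_pos ha_sum hmeas hval hinit hcond
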